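/- Let (ĝ, ·̂, T̂) be an abelian extension of (g,·,T) by (M,·,T_M), and s₁, s₂ two sections of p: ĝ → g. Then the induced Rota-Baxter bimodule structures on M agree (s₁(a)·̂m = s₂(a)·̂m and m·̂s₁(a) = m·̂s₂(a) for all a ∈ g, m ∈ M), and the associated 2-cocycles differ by a coboundary: ψ₁(a⊗b) = ψ₂(a⊗b) + a·γ(b) + γ(a)·b - γ(a·b) and χ₁(a) = χ₂(a) + T_M(γ(a)) - γ(T(a)), where γ = s₁ - s₂ (which maps into M). -/
import Mathlib


/-- `ψ(a⊗b) := s(a)·̂s(b) - s(a·b)`. -/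
def extPsi {k : Type*} [Field k] [CharZero k]
    {G H : Type*} [AddCommGroup G] [Module k G] [AddCommGroup H] [Module k H]
    (mulG : G →ₗ[k] G →ₗ[k] G) (mulH : H →ₗ[k] H →ₗ[k] H)
    (s : G →ₗ[k] H) (a b : G) : H :=
  mulH (s a) (s b) - s (mulG a b)

/-- `χ(a) := T̂(s(a)) - s(T(a))`. -/
def extChi {k : Type*} [Field k] [CharZero k]
    {G H : Type*} [AddCommGroup G] [Module k G] [AddCommGroup H] [Module k H]
    (T : G →ₗ[k] G) (Th : H →ₗ[k] H) (s : G →ₗ[k] H) (a : G) : H :=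
  Th (s a) - s (T a)

/-- Two sections of an abelian extension induce the same Rota-Baxter bimodule
structure on M, and the associated 2-cocycles differ by the coboundary of
`γ = s₁ - s₂` (which maps into M). -/
theorem stmt19 {k : Type*} [Field k] [CharZero k]
    {G H : Type*} [AddCommGroup G] [Module k G] [AddCommGroup H] [Module k H]
    (lam : k)
    (mulG : G →ₗ[k] G →ₗ[k] G) (T : G →ₗ[k] G)
    (mulH : H →ₗ[k] H →ₗ[k] H) (Th : H →ₗ[k] H)
    (M : Submodule k H) (p : H →ₗ[k] G)
    (hpsurj : Function.Surjective p)
    (hker : LinearMap.ker p = M)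
    (hpreG : ∀ x y z : G, mulG (mulG x y) z - mulG x (mulG y z)
      = mulG (mulG y x) z - mulG y (mulG x z))
    (hpreH : ∀ x y z : H, mulH (mulH x y) z - mulH x (mulH y z)
      = mulH (mulH y x) z - mulH y (mulH x z))
    (hRBG : ∀ a b : G, mulG (T a) (T b)
      = T (mulG a (T b) + mulG (T a) b + lam • mulG a b))
    (hRBH : ∀ a b : H, mulH (Th a) (Th b)
      = Th (mulH a (Th b) + mulH (Th a) b + lam • mulH a b))
    (hpmul : ∀ x y : H, p (mulH x y) = mulG (p x) (p y))
    (hpT : ∀ x : H, p (Th x) = T (p x))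
    (hMtriv : ∀ u ∈ M, ∀ v ∈ M, mulH u v = 0)
    (hThM : ∀ m ∈ M, Th m ∈ M)
    (s₁ s₂ : G →ₗ[k] H) (hs₁ : ∀ a : G, p (s₁ a) = a) (hs₂ : ∀ a : G, p (s₂ a) = a) :
    (∀ a : G, s₁ a - s₂ a ∈ M) ∧
    (∀ (a : G), ∀ m ∈ M, mulH (s₁ a) m = mulH (s₂ a) m) ∧
    (∀ (a : G), ∀ m ∈ M, mulH m (s₁ a) = mulH m (s₂ a)) ∧
    (∀ a b : G,
      extPsi mulG mulH s₁ a b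
      = extPsi mulG mulH s₂ a b + mulH (s₂ a) (s₁ b - s₂ b)
        + mulH (s₁ a - s₂ a) (s₂ b) - (s₁ (mulG a b) - s₂ (mulG a b))) ∧
    (∀ a : G,
      extChi T Th s₁ a
      = extChi T Th s₂ a + Th (s₁ a - s₂ a) - (s₁ (T a) - s₂ (T a))) := by
  have hmem : ∀ a : G, s₁ a - s₂ a ∈ M := by
    intro a
    rw [← hker, LinearMap.mem_ker, map_sub, hs₁, hs₂, sub_self]
  refine ⟨hmem, ?_, ?_, ?_, ?_⟩
  · intro a m hm
    have : mulH (s₁ a - s₂ a) m = 0 := hMtriv _ (hmem a) _ hm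
    simpa [map_sub, sub_eq_zero] using this
  · intro a m hm
    have : mulH m (s₁ a - s₂ a) = 0 := hMtriv _ hm _ (hmem a)
    simpa [map_sub, sub_eq_zero] using this
  · intro a b
    have h0 : mulH (s₁ a - s₂ a) (s₁ b - s₂ b) = 0 := hMtriv _ (hmem a) _ (hmem b)
    simp only [map_sub, LinearMap.sub_apply] at h0
    simp only [extPsi, map_sub, LinearMap.sub_apply]
    linear_combination (norm := abel) h0
  · intro a
    simp only [extChi, map_sub]
    abel
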